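/- Let q : [t₁−τ,t₂] → ℝⁿ be C² and let h : [t₁−τ,t₂] → ℝⁿ be C² with h(t) = 0 for all t ∈ [t₁−τ,t₁] and h(t) = 0 for all t ∈ [t₂−τ, t₂]. Then the function ε ↦ I^τ[q + εh] := ∫_{t₁}^{t₂} g(t, q(t)+εh(t), q̇(t)+εḣ(t), q(t−τ)+εh(t−τ), q̇(t−τ)+εḣ(t−τ)) dt is differentiable at ε = 0 and (d/dε)|_{ε=0} I^τ[q + εh] = ∫_{t₁}^{t₂−τ} [∂₂g[q]_τ(t) − d/dt ∂₃g[q]_τ(t) + ∂₄g[q]_τ(t+τ) − d/dt ∂₅g[q]_τ(t+τ)]·h(t) dt. -/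

import Mathlib

open Set MeasureTheory RealInnerProductSpace

noncomputable section

/-- `ℝⁿ` as a Euclidean space. -/
abbrev Vec (n : ℕ) := EuclideanSpace ℝ (Fin n)

/-- The type of Lagrangians `L(t, q, q̇, q_τ, q̇_τ)`. -/
abbrev Lag (n : ℕ) := ℝ → Vec n → Vec n → Vec n → Vec n → ℝ

/-- `∂₁L[q]_τ(t)`: partial derivative of `L` w.r.t. its first (time) argument,
evaluated along `[q]_τ(t) = (t, q(t), q̇(t), q(t-τ), q̇(t-τ))`. -/
def dL1 {n : ℕ} (L : Lag n) (τ : ℝ) (q : ℝ → Vec n) (t : ℝ) : ℝ :=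
  deriv (fun s => L s (q t) (deriv q t) (q (t - τ)) (deriv q (t - τ))) t

/-- `∂₂L[q]_τ(t)` (a gradient, i.e. a vector in `ℝⁿ`). -/
def dL2 {n : ℕ} (L : Lag n) (τ : ℝ) (q : ℝ → Vec n) (t : ℝ) : Vec n :=
  gradient (fun y => L t y (deriv q t) (q (t - τ)) (deriv q (t - τ))) (q t)

/-- `∂₃L[q]_τ(t)`. -/
def dL3 {n : ℕ} (L : Lag n) (τ : ℝ) (q : ℝ → Vec n) (t : ℝ) : Vec n :=
  gradient (fun v => L t (q t) v (q (t - τ)) (deriv q (t - τ))) (deriv q t)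

/-- `∂₄L[q]_τ(t)`. -/
def dL4 {n : ℕ} (L : Lag n) (τ : ℝ) (q : ℝ → Vec n) (t : ℝ) : Vec n :=
  gradient (fun y => L t (q t) (deriv q t) y (deriv q (t - τ))) (q (t - τ))

/-- `∂₅L[q]_τ(t)`. -/
def dL5 {n : ℕ} (L : Lag n) (τ : ℝ) (q : ℝ → Vec n) (t : ℝ) : Vec n :=
  gradient (fun v => L t (q t) (deriv q t) (q (t - τ)) v) (deriv q (t - τ))

/-- `L[q]_τ(t)`: the Lagrangian evaluated along the delayed trajectory. -/
def lagAlong {n : ℕ} (L : Lag n) (τ : ℝ) (q : ℝ → Vec n) (t : ℝ) : ℝ :=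
  L t (q t) (deriv q t) (q (t - τ)) (deriv q (t - τ))

/-- The delayed functional `J^τ[q] = ∫_{t₁}^{t₂} L[q]_τ(t) dt`. -/
def Jτ {n : ℕ} (L : Lag n) (t₁ t₂ τ : ℝ) (q : ℝ → Vec n) : ℝ :=
  ∫ t in t₁..t₂, lagAlong L τ q t

/-- `L` is `C²` in all of its arguments (jointly). -/
def LagC2 {n : ℕ} (L : Lag n) : Prop :=
  ContDiff ℝ 2 (fun p : ℝ × Vec n × Vec n × Vec n × Vec n =>
    L p.1 p.2.1 p.2.2.1 p.2.2.2.1 p.2.2.2.2)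

/-- The Euler–Lagrange equations with time delay for the Lagrangian `L`. -/
def ELdelay {n : ℕ} (L : Lag n) (t₁ t₂ τ : ℝ) (q : ℝ → Vec n) : Prop :=
  (∀ t ∈ Icc t₁ (t₂ - τ),
      deriv (fun s => dL3 L τ q s + dL5 L τ q (s + τ)) t
        = dL2 L τ q t + dL4 L τ q (t + τ)) ∧
  (∀ t ∈ Icc (t₂ - τ) t₂,
      deriv (fun s => dL3 L τ q s) t = dL2 L τ q t)

/-! Differentiating under the integral sign (the `ε`-derivative of the integrand is jointly
continuous, hence bounded on compacts), the derivative at `ε = 0` is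
`∫_{t₁}^{t₂} ∂₂g·h(t) + ∂₃g·ḣ(t) + ∂₄g·h(t-τ) + ∂₅g·ḣ(t-τ)`, all partials taken along `[q]_τ(t)`.
After the substitution `t ↦ t + τ` in the delayed terms, the vanishing of `h` on `[t₁-τ, t₁]`
and on `[t₂-τ, t₂]` confines everything to `[t₁, t₂-τ]`, and integrating the `ḣ` terms by parts,
with boundary terms killed by `h t₁ = h (t₂-τ) = 0`, gives the stated integrand. -/

namespace TimeDelay

section Calculus

variable {E F V : Type*} [NormedAddCommGroup E] [NormedSpace ℝ E]
  [NormedAddCommGroup F] [NormedSpace ℝ F] [NormedAddCommGroup V] [InnerProductSpace ℝ V]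

theorem hasDerivAt_intervalIntegral_comp_add_smul {G : E → F} (hG : ContDiff ℝ 1 G)
    {u v : ℝ → E} (hu : Continuous u) (hv : Continuous v) (a b : ℝ) :
    HasDerivAt (fun ε : ℝ => ∫ t in a..b, G (u t + ε • v t))
      (∫ t in a..b, fderiv ℝ G (u t) (v t)) 0 := by
  set G' : ℝ → ℝ → F := fun ε t => fderiv ℝ G (u t + ε • v t) (v t)
  have hG'_cont : Continuous fun p : ℝ × ℝ => G' p.1 p.2 :=
    ((hG.continuous_fderiv one_ne_zero).comp ((hu.comp continuous_snd).add
      (continuous_fst.smul (hv.comp continuous_snd)))).clm_apply (hv.comp continuous_snd)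
  have hG_cont (ε : ℝ) : Continuous fun t => G (u t + ε • v t) :=
    hG.continuous.comp (hu.add (continuous_const.smul hv))
  have hG'_deriv (t ε : ℝ) : HasDerivAt (fun ε : ℝ => G (u t + ε • v t)) (G' ε t) ε := by
    have hline : HasDerivAt (fun ε : ℝ => u t + ε • v t) (v t) ε := by
      simpa using ((hasDerivAt_id ε).smul_const (v t)).const_add (u t)
    exact (hG.differentiable one_ne_zero _).hasFDerivAt.comp_hasDerivAt ε hline
  -- a bound for `G'` on the compact `closedBall 0 1 ×ˢ uIcc a b` dominates the difference quotients
  obtain ⟨C, hC⟩ := ((isCompact_closedBall (0 : ℝ) 1).prod (isCompact_uIcc (a := a) (b := b))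
    ).exists_bound_of_continuousOn hG'_cont.continuousOn
  have key := intervalIntegral.hasDerivAt_integral_of_dominated_loc_of_deriv_le
    (μ := volume) (F' := G') (bound := fun _ => C) (Metric.ball_mem_nhds 0 one_pos)
    (.of_forall fun ε => (hG_cont ε).aestronglyMeasurable) ((hG_cont 0).intervalIntegrable a b)
    (hG'_cont.comp (Continuous.prodMk_right 0)).aestronglyMeasurable
    (.of_forall fun t ht ε hε =>
      hC (ε, t) ⟨Metric.ball_subset_closedBall hε, Ioc_subset_Icc_self ht⟩)
    intervalIntegrable_const (.of_forall fun t _ ε _ => hG'_deriv t ε)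
  simpa [G'] using key.2

theorem intervalIntegral_eq_zero_of_eqOn_Ioo {f : ℝ → F} {a b : ℝ} (hab : a ≤ b)
    (hf : EqOn f 0 (Ioo a b)) : ∫ t in a..b, f t = 0 := by
  rw [intervalIntegral.integral_of_le hab, integral_Ioc_eq_integral_Ioo (μ := volume)]
  exact setIntegral_eq_zero_of_forall_eq_zero hf

theorem inner_add_inner_deriv_eq_zero_of_mem_Ioo {A B h : ℝ → V} {a b t : ℝ}
    (hh : ∀ s ∈ Icc a b, h s = 0) (ht : t ∈ Ioo a b) :
    ⟪B t, h t⟫ + ⟪A t, deriv h t⟫ = 0 := by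
  have hderiv : deriv h t = 0 := by
    have hzero : EqOn h 0 (Ioo a b) := fun s hs => hh s (Ioo_subset_Icc_self hs)
    simpa using hzero.deriv isOpen_Ioo ht
  simp [hh t (Ioo_subset_Icc_self ht), hderiv]

theorem integral_inner_add_inner_deriv {A B h : ℝ → V} (hB : Continuous B)
    (hA : ContDiff ℝ 1 A) (hh : ContDiff ℝ 1 h) {a b : ℝ} (ha : h a = 0) (hb : h b = 0) :
    ∫ t in a..b, (⟪B t, h t⟫ + ⟪A t, deriv h t⟫) = ∫ t in a..b, ⟪B t - deriv A t, h t⟫ := by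
  have hA' := hA.continuous_deriv le_rfl
  have hh' := hh.continuous_deriv le_rfl
  have hprod (t : ℝ) : HasDerivAt (fun s => ⟪A s, h s⟫) (⟪A t, deriv h t⟫ + ⟪deriv A t, h t⟫) t :=
    ((hA.differentiable one_ne_zero t).hasDerivAt).inner ℝ
      ((hh.differentiable one_ne_zero t).hasDerivAt)
  -- the difference of the two integrands is `(⟪A, h⟫)'`, whose integral vanishes with `h`
  rw [← sub_eq_zero, ← intervalIntegral.integral_sub
    (((hB.inner hh.continuous).add (hA.continuous.inner hh')).intervalIntegrable _ _)
    (((hB.sub hA').inner hh.continuous).intervalIntegrable _ _)]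
  have hdiff : (fun t => ⟪B t, h t⟫ + ⟪A t, deriv h t⟫ - ⟪B t - deriv A t, h t⟫)
      = fun t => ⟪A t, deriv h t⟫ + ⟪deriv A t, h t⟫ := by
    ext t
    rw [inner_sub_left]
    ring
  rw [hdiff, intervalIntegral.integral_eq_sub_of_hasDerivAt (fun t _ => hprod t)
    (((hA.continuous.inner hh').add (hA'.inner hh.continuous)).intervalIntegrable _ _)]
  simp [ha, hb]

theorem integral_delayed_first_variation {A₂ A₃ A₄ A₅ h : ℝ → V} (hA₂ : Continuous A₂)
    (hA₃ : ContDiff ℝ 1 A₃) (hA₄ : Continuous A₄) (hA₅ : ContDiff ℝ 1 A₅) (hh : ContDiff ℝ 1 h)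
    {t₁ t₂ τ : ℝ} (hτ : 0 ≤ τ) (hh₁ : ∀ t ∈ Icc (t₁ - τ) t₁, h t = 0)
    (hh₂ : ∀ t ∈ Icc (t₂ - τ) t₂, h t = 0) :
    ∫ t in t₁..t₂, (⟪A₂ t, h t⟫ + ⟪A₃ t, deriv h t⟫ + ⟪A₄ t, h (t - τ)⟫
        + ⟪A₅ t, deriv h (t - τ)⟫)
      = ∫ t in t₁..(t₂ - τ),
          ⟪A₂ t - deriv A₃ t + A₄ (t + τ) - deriv (fun s => A₅ (s + τ)) t, h t⟫ := by
  have hshift : Continuous fun s : ℝ => s + τ := continuous_id.add continuous_const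
  have hB₄ : Continuous fun s => A₄ (s + τ) := hA₄.comp hshift
  have hB₅ : ContDiff ℝ 1 fun s => A₅ (s + τ) := hA₅.comp (contDiff_id.add contDiff_const)
  have hh' := hh.continuous_deriv le_rfl
  have hpresent : Continuous fun t => ⟪A₂ t, h t⟫ + ⟪A₃ t, deriv h t⟫ :=
    (hA₂.inner hh.continuous).add (hA₃.continuous.inner hh')
  have hshifted : Continuous fun s => ⟪A₄ (s + τ), h s⟫ + ⟪A₅ (s + τ), deriv h s⟫ :=
    (hB₄.inner hh.continuous).add (hB₅.continuous.inner hh')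
  have hdelayed : Continuous fun t => ⟪A₄ t, h (t - τ)⟫ + ⟪A₅ t, deriv h (t - τ)⟫ :=
    (hA₄.inner (hh.continuous.comp (continuous_sub_right τ))).add
      (hA₅.continuous.inner (hh'.comp (continuous_sub_right τ)))
  have hh₁' : h t₁ = 0 := hh₁ t₁ ⟨by linarith, le_rfl⟩
  have hh₂' : h (t₂ - τ) = 0 := hh₂ (t₂ - τ) ⟨le_rfl, by linarith⟩
  -- on `[t₂ - τ, t₂]` the variation vanishes, so only `[t₁, t₂ - τ]` contributes
  have present : ∫ t in t₁..t₂, (⟪A₂ t, h t⟫ + ⟪A₃ t, deriv h t⟫)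
      = ∫ t in t₁..(t₂ - τ), ⟪A₂ t - deriv A₃ t, h t⟫ := by
    rw [← intervalIntegral.integral_add_adjacent_intervals (b := t₂ - τ)
      (hpresent.intervalIntegrable _ _) (hpresent.intervalIntegrable _ _),
      intervalIntegral_eq_zero_of_eqOn_Ioo (by linarith)
        fun t ht => inner_add_inner_deriv_eq_zero_of_mem_Ioo hh₂ ht,
      add_zero, integral_inner_add_inner_deriv hA₂ hA₃ hh hh₁' hh₂']
  -- after the substitution `s = t - τ`, the interval `[t₁ - τ, t₁]` drops out likewise
  have delayed : ∫ t in t₁..t₂, (⟪A₄ t, h (t - τ)⟫ + ⟪A₅ t, deriv h (t - τ)⟫)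
      = ∫ t in t₁..(t₂ - τ), ⟪A₄ (t + τ) - deriv (fun s => A₅ (s + τ)) t, h t⟫ := by
    rw [show (∫ t in t₁..t₂, (⟪A₄ t, h (t - τ)⟫ + ⟪A₅ t, deriv h (t - τ)⟫))
        = ∫ s in (t₁ - τ)..(t₂ - τ), (⟪A₄ (s + τ), h s⟫ + ⟪A₅ (s + τ), deriv h s⟫) by
          simpa using intervalIntegral.integral_comp_sub_right
            (fun s => ⟪A₄ (s + τ), h s⟫ + ⟪A₅ (s + τ), deriv h s⟫) τ,
      ← intervalIntegral.integral_add_adjacent_intervals (b := t₁)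
        (hshifted.intervalIntegrable _ _) (hshifted.intervalIntegrable _ _),
      intervalIntegral_eq_zero_of_eqOn_Ioo (by linarith)
        fun t ht => inner_add_inner_deriv_eq_zero_of_mem_Ioo (A := fun s => A₅ (s + τ))
          (B := fun s => A₄ (s + τ)) hh₁ ht,
      zero_add, integral_inner_add_inner_deriv hB₄ hB₅ hh hh₁' hh₂']
  calc _ = (∫ t in t₁..t₂, (⟪A₂ t, h t⟫ + ⟪A₃ t, deriv h t⟫))
        + ∫ t in t₁..t₂, (⟪A₄ t, h (t - τ)⟫ + ⟪A₅ t, deriv h (t - τ)⟫) := by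
        rw [← intervalIntegral.integral_add (hpresent.intervalIntegrable _ _)
          (hdelayed.intervalIntegrable _ _)]
        simp only [add_assoc]
    _ = _ := by
        rw [present, delayed, ← intervalIntegral.integral_add
          (((hA₂.sub (hA₃.continuous_deriv le_rfl)).inner hh.continuous).intervalIntegrable _ _)
          (((hB₄.sub (hB₅.continuous_deriv le_rfl)).inner
            hh.continuous).intervalIntegrable _ _)]
        refine intervalIntegral.integral_congr fun t _ => ?_
        simp only [inner_sub_left, inner_add_left]
        ring

end Calculus

section PartialGradient

variable {E V : Type*} [NormedAddCommGroup E] [NormedSpace ℝ E]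
  [NormedAddCommGroup V] [InnerProductSpace ℝ V] [CompleteSpace V]

def partialGrad (G : E → ℝ) (i : V →L[ℝ] E) (p : E) : V :=
  (InnerProductSpace.toDual ℝ V).symm ((fderiv ℝ G p).comp i)

theorem inner_partialGrad (G : E → ℝ) (i : V →L[ℝ] E) (p : E) (v : V) :
    ⟪partialGrad G i p, v⟫ = fderiv ℝ G p (i v) :=
  InnerProductSpace.toDual_symm_apply

theorem gradient_comp_eq_partialGrad {G : E → ℝ} (hG : Differentiable ℝ G) {φ : V → E}
    {i : V →L[ℝ] E} {x : V} (hφ : HasFDerivAt φ i x) :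
    gradient (fun y => G (φ y)) x = partialGrad G i (φ x) :=
  ((hG (φ x)).hasFDerivAt.comp x hφ).hasGradientAt.gradient

theorem contDiff_partialGrad {G : E → ℝ} (hG : ContDiff ℝ 2 G) (i : V →L[ℝ] E) :
    ContDiff ℝ 1 (partialGrad G i) :=
  (InnerProductSpace.toDual ℝ V).symm.contDiff.comp
    ((hG.fderiv_right le_rfl).clm_comp contDiff_const)

end PartialGradient

section Lagrangian

open ContinuousLinearMap

variable {n : ℕ}

abbrev Phase (n : ℕ) := ℝ × Vec n × Vec n × Vec n × Vec n

def lagUncurry (g : Lag n) (p : Phase n) : ℝ :=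
  g p.1 p.2.1 p.2.2.1 p.2.2.2.1 p.2.2.2.2

def delayedJet (τ : ℝ) (q : ℝ → Vec n) (t : ℝ) : Phase n :=
  (t, q t, deriv q t, q (t - τ), deriv q (t - τ))

def delayedVariation (τ : ℝ) (h : ℝ → Vec n) (t : ℝ) : Phase n :=
  (0, h t, deriv h t, h (t - τ), deriv h (t - τ))

def slot₂ : Vec n →L[ℝ] Phase n := inr ℝ ℝ _ ∘L inl ℝ (Vec n) _
def slot₃ : Vec n →L[ℝ] Phase n := inr ℝ ℝ _ ∘L (inr ℝ (Vec n) _ ∘L inl ℝ (Vec n) _)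
def slot₄ : Vec n →L[ℝ] Phase n :=
  inr ℝ ℝ _ ∘L (inr ℝ (Vec n) _ ∘L (inr ℝ (Vec n) _ ∘L inl ℝ (Vec n) (Vec n)))
def slot₅ : Vec n →L[ℝ] Phase n :=
  inr ℝ ℝ _ ∘L (inr ℝ (Vec n) _ ∘L (inr ℝ (Vec n) _ ∘L inr ℝ (Vec n) (Vec n)))

theorem lagUncurry_delayedJet_add_smul (g : Lag n) (τ : ℝ) (q h : ℝ → Vec n) (ε t : ℝ) :
    lagUncurry g (delayedJet τ q t + ε • delayedVariation τ h t)
      = g t (q t + ε • h t) (deriv q t + ε • deriv h t)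
          (q (t - τ) + ε • h (t - τ)) (deriv q (t - τ) + ε • deriv h (t - τ)) := by
  simp [lagUncurry, delayedJet, delayedVariation]

theorem fderiv_apply_delayedVariation (G : Phase n → ℝ) (p : Phase n) (τ : ℝ)
    (h : ℝ → Vec n) (t : ℝ) :
    fderiv ℝ G p (delayedVariation τ h t)
      = ⟪partialGrad G slot₂ p, h t⟫ + ⟪partialGrad G slot₃ p, deriv h t⟫
        + ⟪partialGrad G slot₄ p, h (t - τ)⟫ + ⟪partialGrad G slot₅ p, deriv h (t - τ)⟫ := by
  have hsplit : delayedVariation τ h t = slot₂ (h t) + slot₃ (deriv h t)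
      + slot₄ (h (t - τ)) + slot₅ (deriv h (t - τ)) := by
    simp [delayedVariation, slot₂, slot₃, slot₄, slot₅]
  simp only [hsplit, map_add, inner_partialGrad]

theorem hasFDerivAt_slot₂ (t : ℝ) (b c d y : Vec n) :
    HasFDerivAt (fun y => ((t, y, b, c, d) : Phase n)) slot₂ y :=
  (hasFDerivAt_prodMk_right t (y, b, c, d)).comp y (hasFDerivAt_prodMk_left y (b, c, d))

theorem hasFDerivAt_slot₃ (t : ℝ) (a c d y : Vec n) :
    HasFDerivAt (fun y => ((t, a, y, c, d) : Phase n)) slot₃ y :=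
  (hasFDerivAt_prodMk_right t (a, y, c, d)).comp y <|
    (hasFDerivAt_prodMk_right a (y, c, d)).comp y (hasFDerivAt_prodMk_left y (c, d))

theorem hasFDerivAt_slot₄ (t : ℝ) (a b d y : Vec n) :
    HasFDerivAt (fun y => ((t, a, b, y, d) : Phase n)) slot₄ y :=
  (hasFDerivAt_prodMk_right t (a, b, y, d)).comp y <|
    (hasFDerivAt_prodMk_right a (b, y, d)).comp y <|
      (hasFDerivAt_prodMk_right b (y, d)).comp y (hasFDerivAt_prodMk_left y d)

theorem hasFDerivAt_slot₅ (t : ℝ) (a b c y : Vec n) :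
    HasFDerivAt (fun y => ((t, a, b, c, y) : Phase n)) slot₅ y :=
  (hasFDerivAt_prodMk_right t (a, b, c, y)).comp y <|
    (hasFDerivAt_prodMk_right a (b, c, y)).comp y <|
      (hasFDerivAt_prodMk_right b (c, y)).comp y (hasFDerivAt_prodMk_right c y)

theorem contDiff_delayedJet (τ : ℝ) {q : ℝ → Vec n} (hq : ContDiff ℝ 2 q) :
    ContDiff ℝ 1 (delayedJet τ q) := by
  have hq' : ContDiff ℝ 1 (deriv q) := ContDiff.deriv' (n := 1) hq
  have hdelay : ContDiff ℝ 1 fun t : ℝ => t - τ := contDiff_id.sub contDiff_const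
  exact contDiff_id.prodMk ((hq.of_le one_le_two).prodMk (hq'.prodMk
    (((hq.of_le one_le_two).comp hdelay).prodMk (hq'.comp hdelay))))

theorem continuous_delayedVariation (τ : ℝ) {h : ℝ → Vec n} (hh : ContDiff ℝ 1 h) :
    Continuous (delayedVariation τ h) := by
  have hh' : Continuous (deriv h) := hh.continuous_deriv le_rfl
  have hdelay : Continuous fun t : ℝ => t - τ := continuous_sub_right τ
  exact continuous_const.prodMk (hh.continuous.prodMk (hh'.prodMk
    ((hh.continuous.comp hdelay).prodMk (hh'.comp hdelay))))

variable {g : Lag n} (hg : Differentiable ℝ (lagUncurry g)) (τ : ℝ) (q : ℝ → Vec n) (t : ℝ)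
include hg

theorem dL2_eq_partialGrad : dL2 g τ q t = partialGrad (lagUncurry g) slot₂ (delayedJet τ q t) :=
  gradient_comp_eq_partialGrad hg (hasFDerivAt_slot₂ _ _ _ _ _)

theorem dL3_eq_partialGrad : dL3 g τ q t = partialGrad (lagUncurry g) slot₃ (delayedJet τ q t) :=
  gradient_comp_eq_partialGrad hg (hasFDerivAt_slot₃ _ _ _ _ _)

theorem dL4_eq_partialGrad : dL4 g τ q t = partialGrad (lagUncurry g) slot₄ (delayedJet τ q t) :=
  gradient_comp_eq_partialGrad hg (hasFDerivAt_slot₄ _ _ _ _ _)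

theorem dL5_eq_partialGrad : dL5 g τ q t = partialGrad (lagUncurry g) slot₅ (delayedJet τ q t) :=
  gradient_comp_eq_partialGrad hg (hasFDerivAt_slot₅ _ _ _ _ _)

end Lagrangian

end TimeDelay

open TimeDelay

theorem first_variation_with_time_delay_first_interval_general
    {n : ℕ} (t₁ t₂ τ : ℝ) (hτ : 0 < τ)
    (g : Lag n) (hg : LagC2 g)
    (q : ℝ → Vec n) (hq : ContDiff ℝ 2 q)
    (h : ℝ → Vec n) (hh : ContDiff ℝ 2 h)
    (hh₁ : ∀ t ∈ Icc (t₁ - τ) t₁, h t = 0)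
    (hh₂ : ∀ t ∈ Icc (t₂ - τ) t₂, h t = 0) :
    HasDerivAt (fun ε : ℝ => ∫ t in t₁..t₂,
        g t (q t + ε • h t) (deriv q t + ε • deriv h t)
          (q (t - τ) + ε • h (t - τ)) (deriv q (t - τ) + ε • deriv h (t - τ)))
      (∫ t in t₁..(t₂ - τ),
        ⟪dL2 g τ q t - deriv (fun s => dL3 g τ q s) t
          + dL4 g τ q (t + τ) - deriv (fun s => dL5 g τ q (s + τ)) t, h t⟫)
      0 := by
  have hG : ContDiff ℝ 2 (lagUncurry g) := hg
  have hG' : Differentiable ℝ (lagUncurry g) := hG.differentiable two_ne_zero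
  have hP (i : Vec n →L[ℝ] Phase n) :
      ContDiff ℝ 1 fun t => partialGrad (lagUncurry g) i (delayedJet τ q t) :=
    (contDiff_partialGrad hG i).comp (contDiff_delayedJet τ hq)
  have hvar := hasDerivAt_intervalIntegral_comp_add_smul (hG.of_le one_le_two)
    (contDiff_delayedJet τ hq).continuous (continuous_delayedVariation τ (hh.of_le one_le_two))
    t₁ t₂
  simp only [lagUncurry_delayedJet_add_smul, fderiv_apply_delayedVariation] at hvar
  rw [integral_delayed_first_variation (hP _).continuous (hP _) (hP _).continuous (hP _)
    (hh.of_le one_le_two) hτ.le hh₁ hh₂] at hvar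
  simpa only [dL2_eq_partialGrad hG', dL3_eq_partialGrad hG', dL4_eq_partialGrad hG',
    dL5_eq_partialGrad hG'] using hvar

/-- first variation of the delayed functional `I^τ` for variations
vanishing on `[t₁-τ, t₁]` and on `[t₂-τ, t₂]`. -/
theorem first_variation_with_time_delay_first_interval
    {n : ℕ} (hn : 0 < n) (t₁ t₂ τ : ℝ) (ht : t₁ < t₂) (hτ : 0 < τ)
    (hτ' : τ < t₂ - t₁) (g : Lag n) (hg : LagC2 g)
    (q : ℝ → Vec n) (hq : ContDiff ℝ 2 q)
    (h : ℝ → Vec n) (hh : ContDiff ℝ 2 h)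
    (hh₁ : ∀ t ∈ Icc (t₁ - τ) t₁, h t = 0)
    (hh₂ : ∀ t ∈ Icc (t₂ - τ) t₂, h t = 0) :
    HasDerivAt (fun ε : ℝ => ∫ t in t₁..t₂,
        g t (q t + ε • h t) (deriv q t + ε • deriv h t)
          (q (t - τ) + ε • h (t - τ)) (deriv q (t - τ) + ε • deriv h (t - τ)))
      (∫ t in t₁..(t₂ - τ),
        ⟪dL2 g τ q t - deriv (fun s => dL3 g τ q s) t
          + dL4 g τ q (t + τ) - deriv (fun s => dL5 g τ q (s + τ)) t, h t⟫)
      0 :=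
  first_variation_with_time_delay_first_interval_general t₁ t₂ τ hτ g hg q hq h hh hh₁ hh₂
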